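/- For any link L, the ascending number satisfies a(L) ≤ ⌊c(L)/2⌋, where c(L) is the minimal crossing number of L and ⌊x⌋ denotes the greatest integer not exceeding x. -/

import Mathlib

noncomputable section

open Set Metric Real

/-- Euclidean 3-space, the ambient space for links. -/
abbrev R3 : Type := EuclideanSpace ℝ (Fin 3)

/-- The Euclidean plane, where link diagrams live. -/
abbrev R2 : Type := EuclideanSpace ℝ (Fin 2)

/-- Convenient constructor for points of `R3`. -/
def v3 (a b c : ℝ) : R3 := WithLp.toLp 2 ![a, b, c]

/-- Convenient constructor for points of `R2`. -/
def v2 (a b : ℝ) : R2 := WithLp.toLp 2 ![a, b]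

/-- The projection of `ℝ³` onto the plane of the diagram. -/
def pr (x : R3) : R2 := v2 (x 0) (x 1)

/-- The height function on `ℝ³` (the coordinate forgotten by `pr`). -/
def ht (x : R3) : ℝ := x 2

/-- The parametrizing circle `ℝ/ℤ`. -/
abbrev S1 : Type := AddCircle (1 : ℝ)

instance : Fact ((0 : ℝ) < 1) := ⟨one_pos⟩

/-- The time in `[0,1)` at which the point of parameter `t` is visited when
traversing a component from its basepoint (parameter `0`) in the direction
of its orientation. -/
def tOf (t : S1) : ℝ := (AddCircle.equivIco 1 0 t).1

/-- A link with `n` ordered components: a (tame, i.e. polygonal up to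
parametrization) topological embedding of `n` disjoint circles into `ℝ³`.
The component carrying a point `(i, t)` is `i` (this gives the ordering), the
orientation of each component is the one induced by the parametrization, and
the basepoint of each component is the point of parameter `0`.  (Working in
the piecewise linear category, every component is required to have polygonal
image.) -/
structure Link (n : ℕ) where
  emb : Fin n × S1 → R3
  continuous : Continuous emb
  injective : Function.Injective emb
  polygonal : ∀ i : Fin n, ∃ F : Finset (R3 × R3),
    (Set.range fun t : S1 => emb (i, t)) = ⋃ s ∈ F, segment ℝ s.1 s.2

/-- `Carries L A` : some ambient isotopy of `ℝ³` carries (the image of) `L`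
onto the set `A`. -/
def Carries {n : ℕ} (L : Link n) (A : Set R3) : Prop :=
  ∃ H : ℝ → (R3 ≃ₜ R3),
    Continuous (fun p : ℝ × R3 => H p.1 p.2) ∧
    H 0 = Homeomorph.refl R3 ∧
    (H 1) '' (Set.range L.emb) = A

/-- Two links are equivalent if an ambient isotopy carries one onto the other. -/
def LinkEquiv {n : ℕ} (L₁ L₂ : Link n) : Prop := Carries L₁ (Set.range L₂.emb)

/-- The set of double points (crossing points) of the projection of a link. -/
def doublePts {n : ℕ} (L : Link n) : Set R2 :=
  {x | ∃ u v : Fin n × S1, u ≠ v ∧ pr (L.emb u) = x ∧ pr (L.emb v) = x}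

/-- A (based ordered oriented) link diagram: a link in regular position with
respect to the projection `pr`; there are finitely many crossings, each
crossing is a transverse double point, and no basepoint lies over a
crossing. -/
structure Diagram (n : ℕ) extends Link n where
  finiteCrossings : (doublePts toLink).Finite
  doubleOnly : ∀ x ∈ doublePts toLink, ∃ u v : Fin n × S1, u ≠ v ∧
    pr (toLink.emb u) = x ∧ pr (toLink.emb v) = x ∧
    ∀ w : Fin n × S1, pr (toLink.emb w) = x → w = u ∨ w = v
  baseFree : ∀ i : Fin n, pr (toLink.emb (i, 0)) ∉ doublePts toLink

/-- `u` is encountered strictly before `v` when the components of a diagram are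
traversed in order, each from its basepoint in the direction of its
orientation. -/
def encBefore {n : ℕ} (u v : Fin n × S1) : Prop :=
  u.1 < v.1 ∨ (u.1 = v.1 ∧ tOf u.2 < tOf v.2)

/-- The crossing `x` of the diagram `D` is ascending: it is first encountered
as an under-crossing.  These are exactly the crossings at which `D` differs
from its descending diagram `d(D)`. -/
def AscendingAt {n : ℕ} (D : Diagram n) (x : R2) : Prop :=
  ∃ u v : Fin n × S1, pr (D.emb u) = x ∧ pr (D.emb v) = x ∧
    encBefore u v ∧ ht (D.emb u) < ht (D.emb v)

/-- A diagram is descending if every crossing is first encountered as an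
over-crossing; equivalently, it coincides with its descending diagram. -/
def IsDescending {n : ℕ} (D : Diagram n) : Prop :=
  ∀ x ∈ doublePts D.toLink, ¬ AscendingAt D x

/-- The ascending number `a(D̃)` of a diagram: the number of crossings at which
`D` differs from its descending diagram `d(D)`. -/
def diagAsc {n : ℕ} (D : Diagram n) : ℕ := {x : R2 | AscendingAt D x}.ncard

/-- The ascending number `a(L)` of a link: the minimum of `a(D̃)` over all
based ordered oriented diagrams of `L`. -/
def ascNum {n : ℕ} (L : Link n) : ℕ :=
  sInf {m : ℕ | ∃ D : Diagram n, LinkEquiv D.toLink L ∧ diagAsc D = m}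

/-- The minimal crossing number `c(L)` of a link. -/
def crossingNum {n : ℕ} (L : Link n) : ℕ :=
  sInf {m : ℕ | ∃ D : Diagram n, LinkEquiv D.toLink L ∧ (doublePts D.toLink).ncard = m}

/-- The closed unit disk in the plane. -/
def Disk2 : Set R2 := Metric.closedBall 0 1

/-- The unit circle, boundary of `Disk2`. -/
def Circ2 : Set R2 := Metric.sphere 0 1

/-- The components of `L` indexed by `S` form a trivial link: they bound
disjoint embedded disks. -/
def SubTrivial {n : ℕ} (L : Link n) (S : Set (Fin n)) : Prop :=
  ∃ F : Fin n × R2 → R3,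
    ContinuousOn F (S ×ˢ Disk2) ∧ Set.InjOn F (S ×ˢ Disk2) ∧
    ∀ i ∈ S, (Set.range fun t : S1 => L.emb (i, t)) = F '' ({i} ×ˢ Circ2)

/-- A trivial link: all components bound disjoint embedded disks. -/
def IsTrivialLink {n : ℕ} (L : Link n) : Prop := SubTrivial L Set.univ

/-- The set of crossings at which the two diagrams `D`, `D'` (assumed to have
the same underlying projection) differ, i.e. where a crossing change has been
performed. -/
def diffCrossings {n : ℕ} (D D' : Diagram n) : Set R2 :=
  {x : R2 | ∃ u v : Fin n × S1, u ≠ v ∧ pr (D.emb u) = x ∧ pr (D.emb v) = x ∧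
    ht (D.emb u) < ht (D.emb v) ∧ ht (D'.emb v) < ht (D'.emb u)}

/-- The unknotting (unlinking) number `u(L)`: the minimal number of crossing
changes, over all diagrams of `L`, needed to turn `L` into a trivial link. -/
def unknottingNum {n : ℕ} (L : Link n) : ℕ :=
  sInf {m : ℕ | ∃ D D' : Diagram n, LinkEquiv D.toLink L ∧
    pr ∘ D'.emb = pr ∘ D.emb ∧ IsTrivialLink D'.toLink ∧
    (diffCrossings D D').ncard = m}

/-- The set of points of (the domain of) `L` at which the height function has
a local maximum. -/
def maxSet {n : ℕ} (L : Link n) : Set (Fin n × S1) :=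
  {u | IsLocalMax (fun w => ht (L.emb w)) u}

/-- The number of local maxima (counted as connected families) of the height
function on a given embedding. -/
def bridgeCount {n : ℕ} (L : Link n) : ℕ :=
  Nat.card (ConnectedComponents ↥(maxSet L))

/-- The bridge number `b(L)`: the minimal number of local maxima of the height
function over all embeddings of `L`. -/
def bridgeNum {n : ℕ} (L : Link n) : ℕ :=
  sInf {m : ℕ | ∃ G : Link n, LinkEquiv G L ∧
    Finite (ConnectedComponents ↥(maxSet G)) ∧ bridgeCount G = m}

/-- The `i`-th component of a link, as a knot. -/
def component {n : ℕ} (L : Link n) (i : Fin n) : Link 1 where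
  emb := fun p => L.emb (i, p.2)
  continuous := L.continuous.comp (continuous_const.prodMk continuous_snd)
  injective := by
    rintro ⟨a1, a2⟩ ⟨b1, b2⟩ hab
    have h := L.injective hab
    rw [Prod.mk.injEq] at h
    rw [Prod.mk.injEq]
    exact ⟨Subsingleton.elim _ _, h.2⟩
  polygonal := fun _ => L.polygonal i

/-- The 2-component sublink of `L` on the (distinct) components `i` and `j`. -/
def pairSub {n : ℕ} (L : Link n) (i j : Fin n) (hij : i ≠ j) : Link 2 where
  emb := fun p => L.emb (![i, j] p.1, p.2)
  continuous := L.continuous.comp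
    (((continuous_of_discreteTopology (f := fun k : Fin 2 => ![i, j] k)).comp
      continuous_fst).prodMk continuous_snd)
  injective := by
    rintro ⟨a1, a2⟩ ⟨b1, b2⟩ hab
    have h := L.injective hab
    rw [Prod.mk.injEq] at h
    rw [Prod.mk.injEq]
    refine ⟨?_, h.2⟩
    have h1 := h.1
    fin_cases a1 <;> fin_cases b1 <;> simp_all
  polygonal := by
    intro k
    fin_cases k
    · simpa using L.polygonal i
    · simpa using L.polygonal j

/-- An arc with endpoints `a` and `b`. -/
def IsArc (γ : Set R3) (a b : R3) : Prop :=
  ∃ f : ℝ → R3, ContinuousOn f (Icc (0:ℝ) 1) ∧ Set.InjOn f (Icc (0:ℝ) 1) ∧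
    f '' Icc (0:ℝ) 1 = γ ∧ f 0 = a ∧ f 1 = b

/-- `K` is a connected sum of the knots `K₁` and `K₂`: after an ambient
isotopy there is a round 2-sphere meeting `K` in exactly two points, and
capping off the two resulting arcs of `K` with an arc on the sphere produces
knots equivalent to `K₁` (inside) and `K₂` (outside). -/
def IsConnectedSum (K K₁ K₂ : Link 1) : Prop :=
  ∃ K' : Link 1, LinkEquiv K' K ∧
  ∃ (c : R3) (r : ℝ), 0 < r ∧ ∃ a b : R3, a ≠ b ∧
    Set.range K'.emb ∩ sphere c r = {a, b} ∧
    ∃ γ : Set R3, IsArc γ a b ∧ γ ⊆ sphere c r ∧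
      Carries K₁ ((Set.range K'.emb ∩ closedBall c r) ∪ γ) ∧
      Carries K₂ ((Set.range K'.emb \ ball c r) ∪ γ)

/-- `IsIterConnSum E m K` : `K` is a connected sum of `m` copies of the knot
`E` (the empty sum being the unknot). -/
inductive IsIterConnSum (E : Link 1) : ℕ → Link 1 → Prop
  | zero (K : Link 1) : IsTrivialLink K → IsIterConnSum E 0 K
  | succ (m : ℕ) (K' K : Link 1) : IsIterConnSum E m K' → IsConnectedSum K K' E →
      IsIterConnSum E (m + 1) K

/-- First strand of the twist region: one of the two strands of a double helix
with `m` half-twists. -/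
def helixA (m : ℤ) : Set R3 :=
  (fun t : ℝ => v3 (cos (π * m * t)) (sin (π * m * t)) (1 + t)) '' Icc 0 1

/-- Second strand of the twist region. -/
def helixB (m : ℤ) : Set R3 :=
  (fun t : ℝ => v3 (-cos (π * m * t)) (-sin (π * m * t)) (1 + t)) '' Icc 0 1

/-- The fold of the hairpin: a semicircle joining the bottoms of the two
helical strands. -/
def bottomArc : Set R3 := (fun θ : ℝ => v3 (cos θ) (sin θ) 1) '' Icc π (2 * π)

/-- The clasp: a polygonal arc joining the two top endpoints of the double
helix which passes once through the eye of the hairpin, clasping the fold. -/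
def capArc (m : ℤ) : Set R3 :=
  segment ℝ (v3 1 0 2) (v3 3 0 2) ∪
  segment ℝ (v3 3 0 2) (v3 3 0 (1/2)) ∪
  segment ℝ (v3 3 0 (1/2)) (v3 0 (-(1/2)) (1/2)) ∪
  segment ℝ (v3 0 (-(1/2)) (1/2)) (v3 0 (-(1/2)) (1 + 1/|(m : ℝ)|)) ∪
  segment ℝ (v3 0 (-(1/2)) (1 + 1/|(m : ℝ)|)) (v3 0 (-3) (1 + 1/|(m : ℝ)|)) ∪
  segment ℝ (v3 0 (-3) (1 + 1/|(m : ℝ)|)) (v3 0 (-3) 3) ∪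
  segment ℝ (v3 0 (-3) 3) (v3 (-1) 0 3) ∪
  segment ℝ (v3 (-1) 0 3) (v3 (-1) 0 2)

/-- The standard twist knot with `m` half-twists and a clasp: a hairpin with
`m` half-twists whose end is passed through its eye (`m = 1` gives the
trefoil, `m = 2` the figure-eight knot, then `5₂`, `6₁`, ...; negative `m`
gives the mirror images). -/
def twistSet (m : ℤ) : Set R3 := helixA m ∪ helixB m ∪ bottomArc ∪ capArc m

/-- `K` is a twist knot: a nontrivial knot obtained from a sequence of
half-twists by adding a clasp. -/
def IsTwistKnot (K : Link 1) : Prop :=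
  ¬ IsTrivialLink K ∧ ∃ m : ℤ, Carries K (twistSet m)

/-- The standard Hopf link: two round circles linked once. -/
def hopfSet : Set R3 :=
  (Set.range fun θ : ℝ => v3 (cos θ) (sin θ) 0) ∪
  (Set.range fun θ : ℝ => v3 (1 + cos θ) 0 (sin θ))

/-- `L` is a Hopf link. -/
def IsHopfLink (L : Link 2) : Prop := Carries L hopfSet

/-- The standard `(p,q)` curve on the torus of revolution: it winds `p` times
around the meridian and `q` times around the longitude. -/
def torusCurve (p q : ℕ) : Set R3 :=
  Set.range fun t : ℝ =>
    v3 (((2 : ℝ) + cos (2 * π * p * t)) * cos (2 * π * q * t))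
       (((2 : ℝ) + cos (2 * π * p * t)) * sin (2 * π * q * t))
       (sin (2 * π * p * t))

/-- `K` is the `(p,q)`-torus knot. -/
def IsTorusKnot (p q : ℕ) (K : Link 1) : Prop := Carries K (torusCurve p q)

/-- The components of `L` indexed by `S` are split from the remaining ones by
a round 2-sphere. -/
def SplitAt {n : ℕ} (L : Link n) (S : Set (Fin n)) : Prop :=
  ∃ (c : R3) (r : ℝ), 0 < r ∧
    (∀ i ∈ S, ∀ t : S1, L.emb (i, t) ∈ ball c r) ∧
    (∀ i ∉ S, ∀ t : S1, L.emb (i, t) ∉ closedBall c r)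

/-- `L` is completely splittable: its components can be separated by disjoint
embedded 2-spheres (equivalently, after an ambient isotopy they lie in
pairwise disjoint round balls). -/
def CompletelySplittable {n : ℕ} (L : Link n) : Prop :=
  ∃ L' : Link n, LinkEquiv L' L ∧ ∃ (c : Fin n → R3) (r : Fin n → ℝ),
    (∀ i, 0 < r i) ∧
    (Set.univ : Set (Fin n)).Pairwise
      (fun i j => Disjoint (closedBall (c i) (r i)) (closedBall (c j) (r j))) ∧
    ∀ (i : Fin n) (t : S1), L'.emb (i, t) ∈ ball (c i) (r i)

/-!
Reverse both the order of the components and the orientation of every component, keeping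
the basepoints. This gives a based ordered oriented diagram of the same link with the same
crossings, and at each crossing the strand that was met first is now met last. Hence every
crossing is ascending in exactly one of the two diagrams, so `a(D) + a(D') = c(D)`, and for
a diagram realising `c(L)` one of the two has ascending number at most `c(L)/2`.
-/

lemma coe_tOf (t : S1) : ((tOf t : ℝ) : S1) = t :=
  (AddCircle.equivIco 1 0).symm_apply_apply t

lemma tOf_injective : Function.Injective tOf := fun s t h => by
  rw [← coe_tOf s, ← coe_tOf t, h]

lemma tOf_neg {t : S1} (h0 : t ≠ 0) : tOf (-t) = 1 - tOf t := by
  induction t using QuotientAddGroup.induction_on with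
  | H r =>
    have hr : ¬ (0 : ℝ) ≡ r [PMOD 1] := by
      rwa [AddCommGroup.modEq_iff_eq_mod_zmultiples, eq_comm]
    change toIcoMod one_pos 0 (-r) = 1 - toIcoMod one_pos 0 r
    rw [toIcoMod_neg, neg_zero, (AddCommGroup.not_modEq_iff_toIcoMod_eq_toIocMod one_pos).mp hr]

lemma eq_of_pr_eq_of_ht_eq {x y : R3} (hpr : pr x = pr y) (hht : ht x = ht y) : x = y := by
  have h0 : x 0 = y 0 := by simpa [pr, v2] using congrArg (· 0) hpr
  have h1 : x 1 = y 1 := by simpa [pr, v2] using congrArg (· 1) hpr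
  ext i
  fin_cases i
  exacts [h0, h1, hht]

variable {n : ℕ}

lemma Link.ht_ne_of_pr_eq (L : Link n) {u v : Fin n × S1} (huv : u ≠ v)
    (hpr : pr (L.emb u) = pr (L.emb v)) : ht (L.emb u) ≠ ht (L.emb v) :=
  fun hht => huv (L.injective (eq_of_pr_eq_of_ht_eq hpr hht))

def encKey (u : Fin n × S1) : Fin n ×ₗ ℝ := toLex (u.1, tOf u.2)

lemma encBefore_iff_encKey_lt {u v : Fin n × S1} : encBefore u v ↔ encKey u < encKey v :=
  (Prod.Lex.toLex_lt_toLex (x := (u.1, tOf u.2)) (y := (v.1, tOf v.2))).symm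

lemma encKey_injective : Function.Injective (encKey (n := n)) := fun u v h => by
  simp only [encKey, toLex_inj, Prod.mk.injEq] at h
  exact Prod.ext h.1 (tOf_injective h.2)

lemma encBefore_iff_not_encBefore {u v : Fin n × S1} (huv : u ≠ v) :
    encBefore v u ↔ ¬ encBefore u v := by
  rw [encBefore_iff_encKey_lt, encBefore_iff_encKey_lt, not_lt]
  exact ((encKey_injective.ne huv).symm.le_iff_lt).symm

lemma ascendingAt_iff {D : Diagram n} {x : R2} {u v : Fin n × S1} (huv : u ≠ v)
    (hu : pr (D.emb u) = x) (hv : pr (D.emb v) = x)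
    (honly : ∀ w, pr (D.emb w) = x → w = u ∨ w = v) :
    AscendingAt D x ↔ (encBefore u v ↔ ht (D.emb u) < ht (D.emb v)) := by
  have hne := D.ht_ne_of_pr_eq huv (hu.trans hv.symm)
  have hvu := encBefore_iff_not_encBefore huv
  constructor
  · rintro ⟨a, b, ha, hb, hab, hlt⟩
    rcases honly a ha with rfl | rfl <;> rcases honly b hb with rfl | rfl
    · exact absurd hlt (lt_irrefl _)
    · exact iff_of_true hab hlt
    · exact iff_of_false (hvu.mp hab) (lt_asymm hlt)
    · exact absurd hlt (lt_irrefl _)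
  · intro h
    by_cases hfirst : encBefore u v
    · exact ⟨u, v, hu, hv, hfirst, h.mp hfirst⟩
    · exact ⟨v, u, hv, hu, hvu.mpr hfirst, hne.lt_or_gt.resolve_left (mt h.mpr hfirst)⟩

lemma AscendingAt.mem_doublePts {D : Diagram n} {x : R2} (h : AscendingAt D x) :
    x ∈ doublePts D.toLink := by
  obtain ⟨u, v, hu, hv, -, hlt⟩ := h
  exact ⟨u, v, fun huv => hlt.ne (huv ▸ rfl), hu, hv⟩

def revParam (u : Fin n × S1) : Fin n × S1 := (u.1.rev, -u.2)

lemma revParam_involutive : Function.Involutive (revParam (n := n)) := fun u => by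
  simp [revParam]

lemma encBefore_revParam {u v : Fin n × S1} (hu : u.2 ≠ 0) (hv : v.2 ≠ 0) :
    encBefore (revParam u) (revParam v) ↔ encBefore v u := by
  simp only [encBefore, revParam, Fin.rev_lt_rev, Fin.rev_inj, tOf_neg hu, tOf_neg hv,
    sub_lt_sub_iff_left, eq_comm]

namespace Link

def reverse (L : Link n) : Link n where
  emb := L.emb ∘ revParam
  continuous := L.continuous.comp
    (((continuous_of_discreteTopology (f := Fin.rev)).comp continuous_fst).prodMk
      (continuous_neg.comp continuous_snd))
  injective := L.injective.comp revParam_involutive.injective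
  polygonal i := by
    obtain ⟨F, hF⟩ := L.polygonal i.rev
    exact ⟨F, (neg_surjective.range_comp fun t => L.emb (i.rev, t)).trans hF⟩

variable (L : Link n)

@[simp]
lemma reverse_emb_revParam (u : Fin n × S1) : L.reverse.emb (revParam u) = L.emb u :=
  congrArg L.emb (revParam_involutive u)

lemma range_reverse : range L.reverse.emb = range L.emb :=
  revParam_involutive.surjective.range_comp L.emb

@[simp]
lemma doublePts_reverse : doublePts L.reverse = doublePts L := by
  ext x
  constructor
  · rintro ⟨u, v, huv, hu, hv⟩
    exact ⟨_, _, revParam_involutive.injective.ne huv, hu, hv⟩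
  · rintro ⟨u, v, huv, rfl, hv⟩
    exact ⟨revParam u, revParam v, revParam_involutive.injective.ne huv, by simp, by simpa⟩

end Link

lemma LinkEquiv.reverse {L₁ L₂ : Link n} (h : LinkEquiv L₁ L₂) : LinkEquiv L₁.reverse L₂ := by
  unfold LinkEquiv Carries at *
  rwa [L₁.range_reverse]

namespace Diagram

def reverse (D : Diagram n) : Diagram n where
  toLink := D.toLink.reverse
  finiteCrossings := D.toLink.doublePts_reverse ▸ D.finiteCrossings
  doubleOnly x hx := by
    rw [Link.doublePts_reverse] at hx
    obtain ⟨u, v, huv, hu, hv, honly⟩ := D.doubleOnly x hx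
    refine ⟨revParam u, revParam v, revParam_involutive.injective.ne huv, by simpa, by simpa,
      fun w hw => ?_⟩
    simpa only [revParam_involutive.eq_iff] using honly (revParam w) hw
  baseFree i := by
    rw [Link.doublePts_reverse]
    simpa [Link.reverse, revParam] using D.baseFree i.rev

variable (D : Diagram n)

@[simp]
lemma reverse_toLink : D.reverse.toLink = D.toLink.reverse := rfl

lemma ascendingAt_reverse_iff {x : R2} (hx : x ∈ doublePts D.toLink) :
    AscendingAt D.reverse x ↔ ¬ AscendingAt D x := by
  obtain ⟨u, v, huv, hu, hv, honly⟩ := D.doubleOnly x hx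
  -- `tOf_neg` fails only at a basepoint, and no basepoint lies over a crossing
  have hnz : ∀ w, pr (D.emb w) = x → w.2 ≠ 0 := fun w hw h0 =>
    D.baseFree w.1 (by rw [← h0, hw]; exact hx)
  have honly' : ∀ w, pr (D.reverse.emb w) = x → w = revParam u ∨ w = revParam v :=
    fun w hw => by simpa only [revParam_involutive.eq_iff] using honly (revParam w) hw
  rw [ascendingAt_iff huv hu hv honly,
    ascendingAt_iff (revParam_involutive.injective.ne huv) (by simpa) (by simpa) honly',
    encBefore_revParam (hnz u hu) (hnz v hv), encBefore_iff_not_encBefore huv, not_iff]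
  simp

lemma diagAsc_add_diagAsc_reverse :
    diagAsc D + diagAsc D.reverse = (doublePts D.toLink).ncard := by
  have hrev : {x | AscendingAt D.reverse x} = doublePts D.toLink \ {x | AscendingAt D x} := by
    ext x
    by_cases hx : x ∈ doublePts D.toLink
    · simp [hx, D.ascendingAt_reverse_iff hx]
    · simpa [hx] using mt AscendingAt.mem_doublePts (by simpa using hx)
  rw [diagAsc, diagAsc, hrev, add_comm]
  exact Set.ncard_sdiff_add_ncard_of_subset (fun _ => AscendingAt.mem_doublePts)
    D.finiteCrossings

end Diagram

/-- For any link `L`, the ascending number satisfies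
`a(L) ≤ ⌊c(L)/2⌋`, where `c(L)` is the minimal crossing number. -/
theorem ascending_le_half_crossing (n : ℕ) (L : Link n) :
    ascNum L ≤ crossingNum L / 2 := by
  by_cases hL : ∃ D : Diagram n, LinkEquiv D.toLink L
  · obtain ⟨D, hDL, hD⟩ : crossingNum L ∈
        {m | ∃ D : Diagram n, LinkEquiv D.toLink L ∧ (doublePts D.toLink).ncard = m} :=
      Nat.sInf_mem (let ⟨D, hDL⟩ := hL; ⟨_, D, hDL, rfl⟩)
    have h₁ : ascNum L ≤ diagAsc D := Nat.sInf_le ⟨D, hDL, rfl⟩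
    have h₂ : ascNum L ≤ diagAsc D.reverse := Nat.sInf_le ⟨D.reverse, hDL.reverse, rfl⟩
    have hsum := D.diagAsc_add_diagAsc_reverse
    omega
  · have hempty : {m | ∃ D : Diagram n, LinkEquiv D.toLink L ∧ diagAsc D = m} = ∅ :=
      Set.eq_empty_of_forall_notMem fun _ ⟨D, hDL, _⟩ => hL ⟨D, hDL⟩
    simp [ascNum, hempty]

end
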